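/- Let 0 < p ≤ 1, let X be a p-Banach space over 𝔽 = ℝ or ℂ, and let 𝒳 be a basis of X that is C_pg-RGPCC. Then 𝒳 is unconditional with unconditionality constant K ≤ C_pg; in particular ‖f‖ ≤ C_pg·‖f + g‖ for all f, g ∈ X with supp(f) ∩ supp(g) = ∅. -/

import Mathlib

open scoped BigOperators

noncomputable section

/-- A basis of a `p`-Banach space over `𝕜` (`𝕜 = ℝ` or `ℂ`), bundled with the `p`-norm
`N`, the basis vectors `e`, and the biorthogonal functionals `coord`. -/
structure PBasis (𝕜 : Type*) [RCLike 𝕜] (X : Type*) [AddCommGroup X] [Module 𝕜 X]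
    (p : ℝ) : Type _ where
  /-- the `p`-norm of the space -/
  N : X → ℝ
  N_nonneg : ∀ f : X, 0 ≤ N f
  N_eq_zero_iff : ∀ f : X, N f = 0 ↔ f = 0
  N_smul : ∀ (t : 𝕜) (f : X), N (t • f) = ‖t‖ * N f
  N_padd : ∀ f g : X, N (f + g) ^ p ≤ N f ^ p + N g ^ p
  /-- completeness with respect to the `p`-norm -/
  complete : ∀ u : ℕ → X,
      (∀ ε : ℝ, 0 < ε → ∃ n₀ : ℕ, ∀ m n : ℕ, n₀ ≤ m → n₀ ≤ n → N (u m - u n) < ε) →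
      ∃ f : X, ∀ ε : ℝ, 0 < ε → ∃ n₀ : ℕ, ∀ n : ℕ, n₀ ≤ n → N (u n - f) < ε
  /-- the basis vectors -/
  e : ℕ → X
  /-- the biorthogonal functionals -/
  coord : ℕ → X →ₗ[𝕜] 𝕜
  biorth : ∀ n m : ℕ, coord n (e m) = if n = m then (1 : 𝕜) else 0
  /-- the closed linear span of the basis vectors is the whole space -/
  dense_span : ∀ f : X, ∀ ε : ℝ, 0 < ε →
      ∃ g ∈ Submodule.span 𝕜 (Set.range e), N (f - g) < ε
  e_bdd : ∃ c : ℝ, ∀ n : ℕ, N (e n) ≤ c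
  coord_bdd : ∃ c : ℝ, ∀ (n : ℕ) (f : X), ‖coord n f‖ ≤ c * N f

namespace PBasis

variable {𝕜 : Type*} [RCLike 𝕜] {X : Type*} [AddCommGroup X] [Module 𝕜 X] {p : ℝ}

/-- The projection `P_A f = ∑_{n ∈ A} x_n^*(f) x_n`. -/
def proj (bs : PBasis 𝕜 X p) (A : Finset ℕ) (f : X) : X :=
  ∑ n ∈ A, bs.coord n f • bs.e n

/-- The support of `f`. -/
def supp (bs : PBasis 𝕜 X p) (f : X) : Set ℕ := {n | bs.coord n f ≠ 0}

/-- `A` is a greedy set of `f`: `min_{n ∈ A} |x_n^*(f)| ≥ max_{m ∉ A} |x_m^*(f)|`. -/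
def IsGreedySet (bs : PBasis 𝕜 X p) (f : X) (A : Finset ℕ) : Prop :=
  ∀ n ∈ A, ∀ m : ℕ, m ∉ A → ‖bs.coord m f‖ ≤ ‖bs.coord n f‖

/-- `𝟙_{ε,A} = ∑_{j ∈ A} ε_j x_j`. -/
def indSign (bs : PBasis 𝕜 X p) (ε : ℕ → 𝕜) (A : Finset ℕ) : X :=
  ∑ j ∈ A, ε j • bs.e j

/-- `𝟙_A = ∑_{j ∈ A} x_j`. -/
def ind (bs : PBasis 𝕜 X p) (A : Finset ℕ) : X := ∑ j ∈ A, bs.e j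

/-- `ε` is a sign on `A`. -/
def IsSign (ε : ℕ → 𝕜) (A : Finset ℕ) : Prop := ∀ j ∈ A, ‖ε j‖ = 1

/-- `min_{n ∈ A} |x_n^*(f)|`. -/
def minCoef (bs : PBasis 𝕜 X p) (f : X) (A : Finset ℕ) : ℝ :=
  sInf ((fun n => ‖bs.coord n f‖) '' (A : Set ℕ))

/-- `‖f − P_A(f)‖ ≤ C·σ_m(f)` for every greedy set `A` of cardinality `m`. -/
def IsGreedyWith (bs : PBasis 𝕜 X p) (C : ℝ) : Prop :=
  ∀ (f : X) (A B : Finset ℕ) (a : ℕ → 𝕜), bs.IsGreedySet f A → B.card ≤ A.card →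
    bs.N (f - bs.proj A f) ≤ C * bs.N (f - ∑ j ∈ B, a j • bs.e j)

/-- `‖f − P_A(f)‖ ≤ C·ρ_m(f)` for every greedy set `A` of cardinality `m`, where
`ρ_m(f) = inf {‖f − α 𝟙_{ε,B}‖ : |B| = m, ε sign}` and `α = min_{n ∈ A} |x_n^*(f)|`. -/
def IsRGPCCWith (bs : PBasis 𝕜 X p) (C : ℝ) : Prop :=
  ∀ (f : X) (A B : Finset ℕ) (ε : ℕ → 𝕜), bs.IsGreedySet f A → B.card = A.card →
    IsSign ε B →
    bs.N (f - bs.proj A f) ≤ C * bs.N (f - ((bs.minCoef f A : ℝ) : 𝕜) • bs.indSign ε B)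

/-- `‖f − P_A(f)‖ ≤ C·ϱ_m(f)` for every greedy set `A` of cardinality `m`, where
`ϱ_m(f) = inf {‖f − α 𝟙_B‖ : |B| = m}` and `α = min_{n ∈ A} |x_n^*(f)|`. -/
def IsURGPCCWith (bs : PBasis 𝕜 X p) (C : ℝ) : Prop :=
  ∀ (f : X) (A B : Finset ℕ), bs.IsGreedySet f A → B.card = A.card →
    bs.N (f - bs.proj A f) ≤ C * bs.N (f - ((bs.minCoef f A : ℝ) : 𝕜) • bs.ind B)

/-- `K`-unconditionality. -/
def IsUncondWith (bs : PBasis 𝕜 X p) (K : ℝ) : Prop :=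
  ∀ (A : Finset ℕ) (f : X), bs.N (bs.proj A f) ≤ K * bs.N f

/-- `C`-quasi-greediness. -/
def IsQuasiGreedyWith (bs : PBasis 𝕜 X p) (C : ℝ) : Prop :=
  ∀ (f : X) (A : Finset ℕ), bs.IsGreedySet f A → bs.N (f - bs.proj A f) ≤ C * bs.N f

/-- `C`-almost-greediness. -/
def IsAlmostGreedyWith (bs : PBasis 𝕜 X p) (C : ℝ) : Prop :=
  ∀ (f : X) (A B : Finset ℕ), bs.IsGreedySet f A → B.card ≤ A.card →
    bs.N (f - bs.proj A f) ≤ C * bs.N (f - bs.proj B f)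

/-- `D`-democracy. -/
def IsDemocraticWith (bs : PBasis 𝕜 X p) (D : ℝ) : Prop :=
  ∀ A B : Finset ℕ, A.card ≤ B.card → bs.N (bs.ind A) ≤ D * bs.N (bs.ind B)

/-- `D`-superdemocracy. -/
def IsSuperdemocraticWith (bs : PBasis 𝕜 X p) (D : ℝ) : Prop :=
  ∀ (A B : Finset ℕ) (ε η : ℕ → 𝕜), A.card ≤ B.card → IsSign ε A → IsSign η B →
    bs.N (bs.indSign ε A) ≤ D * bs.N (bs.indSign η B)

/-- `A < B`, i.e. every element of `A` is smaller than every element of `B`. -/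
def FinsetBefore (A B : Finset ℕ) : Prop := ∀ a ∈ A, ∀ b ∈ B, a < b

open scoped Classical in
/-- `sgn z = z/|z|` (with the convention `sgn 0 = 1`). -/
def sgn (z : 𝕜) : 𝕜 := if z = 0 then 1 else z / ((‖z‖ : ℝ) : 𝕜)

end PBasis

/-! Fix a finite `A` and let `ε = sgn ∘ x^*(f)`. Adding `t • 𝟙_{ε,A}` to `f`, with `t` above every
`|x_n^*(f)|`, makes `A` a greedy set without changing `f - P_A f` or `f - α 𝟙_{ε,A}`, so the RGPCC
inequality `‖f - P_A f‖ ≤ C ‖f - α 𝟙_{ε,A}‖` holds for every `A`. Enlarging `A` by one index whose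
coefficient is tiny makes `α` tiny, which gives `‖f - P_A f‖ ≤ C ‖f‖`. Approximating `f` by finitely
supported vectors turns this into `‖P_A f‖ ≤ C ‖f‖`, and then into `‖f‖ ≤ C ‖f + g‖` for disjointly
supported `f, g`. Every limit is taken in `‖·‖ ^ p`, which is subadditive. -/

open Filter Topology in
theorem le_of_forall_rpow_le_add_mul_rpow {p a b K : ℝ} (hp : 0 < p) (ha : 0 ≤ a) (hb : 0 ≤ b)
    (h : ∀ η > 0, a ^ p ≤ b ^ p + K * η ^ p) : a ≤ b := by
  rw [← Real.rpow_le_rpow_iff ha hb hp]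
  have hlim : Tendsto (fun η : ℝ => b ^ p + K * η ^ p) (𝓝[>] 0) (𝓝 (b ^ p)) := by
    have := ((Real.continuous_rpow_const hp.le).tendsto 0).mono_left
      (nhdsWithin_le_nhds (s := Set.Ioi 0))
    simpa [Real.zero_rpow hp.ne'] using (this.const_mul K).const_add (b ^ p)
  exact ge_of_tendsto hlim (eventually_nhdsWithin_of_forall h)

theorem rpow_le_mul_rpow_of_le_mul {p a b C : ℝ} (hp : 0 ≤ p) (ha : 0 ≤ a) (hb : 0 ≤ b)
    (hC : 0 ≤ C) (h : a ≤ C * b) : a ^ p ≤ C ^ p * b ^ p := by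
  rw [← Real.mul_rpow hC hb]
  exact Real.rpow_le_rpow ha h hp

namespace PBasis

variable {𝕜 : Type*} [RCLike 𝕜] {X : Type*} [AddCommGroup X] [Module 𝕜 X] {p : ℝ}

theorem norm_sgn (z : 𝕜) : ‖sgn z‖ = 1 := by
  unfold sgn
  split_ifs with hz
  · simp
  · rw [norm_div, RCLike.norm_ofReal, abs_norm, div_self (norm_ne_zero_iff.2 hz)]

theorem norm_add_mul_sgn (z : 𝕜) {t : ℝ} (ht : 0 ≤ t) : ‖z + (t : 𝕜) * sgn z‖ = ‖z‖ + t := by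
  have hpolar : z = sgn z * ((‖z‖ : ℝ) : 𝕜) := by
    unfold sgn
    split_ifs with hz
    · simp [hz]
    · field_simp [show ((‖z‖ : ℝ) : 𝕜) ≠ 0 by simpa using hz]
  have : z + (t : 𝕜) * sgn z = sgn z * ((‖z‖ + t : ℝ) : 𝕜) := by
    rw [RCLike.ofReal_add, mul_add, ← hpolar, mul_comm]
  rw [this, norm_mul, norm_sgn, one_mul, RCLike.norm_ofReal, abs_of_nonneg (by positivity)]

variable (bs : PBasis 𝕜 X p)

theorem N_neg (f : X) : bs.N (-f) = bs.N f := by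
  simpa using bs.N_smul (-1) f

theorem N_sub_comm (f g : X) : bs.N (f - g) = bs.N (g - f) := by
  rw [← bs.N_neg, neg_sub]

theorem N_sub_rpow_le (f g : X) : bs.N (f - g) ^ p ≤ bs.N f ^ p + bs.N g ^ p := by
  simpa [sub_eq_add_neg, bs.N_neg] using bs.N_padd f (-g)

theorem N_rpow_le_N_sub_rpow_add (f g : X) : bs.N f ^ p ≤ bs.N (f - g) ^ p + bs.N g ^ p := by
  simpa using bs.N_padd (f - g) g

theorem N_sum_rpow_le (hp : p ≠ 0) {ι : Type*} (s : Finset ι) (v : ι → X) :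
    bs.N (∑ i ∈ s, v i) ^ p ≤ ∑ i ∈ s, bs.N (v i) ^ p := by
  classical
  induction s using Finset.induction_on with
  | empty => simp [(bs.N_eq_zero_iff 0).2 rfl, Real.zero_rpow hp]
  | insert a s ha ih =>
    rw [Finset.sum_insert ha, Finset.sum_insert ha]
    linarith [bs.N_padd (v a) (∑ i ∈ s, v i)]

theorem N_smul_rpow (t : 𝕜) (f : X) : bs.N (t • f) ^ p = ‖t‖ ^ p * bs.N f ^ p := by
  rw [bs.N_smul, Real.mul_rpow (norm_nonneg t) (bs.N_nonneg f)]

theorem exists_coord_le_mul : ∃ c > 0, ∀ (n : ℕ) (f : X), ‖bs.coord n f‖ ≤ c * bs.N f := by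
  obtain ⟨c, hc⟩ := bs.coord_bdd
  exact ⟨max c 1, by positivity, fun n f =>
    (hc n f).trans (mul_le_mul_of_nonneg_right (le_max_left c 1) (bs.N_nonneg f))⟩

theorem exists_N_e_le : ∃ c ≥ 0, ∀ n, bs.N (bs.e n) ≤ c := by
  obtain ⟨c, hc⟩ := bs.e_bdd
  exact ⟨c, (bs.N_nonneg _).trans (hc 0), hc⟩

theorem coord_sum_smul (a : ℕ → 𝕜) (A : Finset ℕ) (n : ℕ) :
    bs.coord n (∑ j ∈ A, a j • bs.e j) = if n ∈ A then a n else 0 := by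
  simp [bs.biorth]

theorem coord_proj (A : Finset ℕ) (f : X) (n : ℕ) :
    bs.coord n (bs.proj A f) = if n ∈ A then bs.coord n f else 0 :=
  bs.coord_sum_smul _ A n

theorem coord_indSign (ε : ℕ → 𝕜) (A : Finset ℕ) (n : ℕ) :
    bs.coord n (bs.indSign ε A) = if n ∈ A then ε n else 0 :=
  bs.coord_sum_smul ε A n

theorem proj_add (A : Finset ℕ) (f g : X) : bs.proj A (f + g) = bs.proj A f + bs.proj A g := by
  simp only [proj, map_add, add_smul, Finset.sum_add_distrib]

theorem proj_sub (A : Finset ℕ) (f g : X) : bs.proj A (f - g) = bs.proj A f - bs.proj A g := by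
  simp only [proj, map_sub, sub_smul, Finset.sum_sub_distrib]

theorem proj_smul (A : Finset ℕ) (c : 𝕜) (f : X) : bs.proj A (c • f) = c • bs.proj A f := by
  simp only [proj, map_smul, smul_eq_mul, mul_smul, Finset.smul_sum]

theorem proj_congr {A : Finset ℕ} {f g : X} (h : ∀ n ∈ A, bs.coord n f = bs.coord n g) :
    bs.proj A f = bs.proj A g :=
  Finset.sum_congr rfl fun n hn => by rw [h n hn]

theorem proj_proj (A B : Finset ℕ) (f : X) :
    bs.proj A (bs.proj B f) = bs.proj (A ∩ B) f := by
  change ∑ n ∈ A, bs.coord n (bs.proj B f) • bs.e n = _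
  simp only [coord_proj, ite_smul, zero_smul, Finset.sum_ite_mem]
  rfl

theorem proj_indSign (ε : ℕ → 𝕜) (A : Finset ℕ) : bs.proj A (bs.indSign ε A) = bs.indSign ε A :=
  Finset.sum_congr rfl fun n hn => by rw [bs.coord_indSign, if_pos hn]

theorem sub_proj_eq_proj_sdiff {T : Finset ℕ} {g : X} (hg : bs.proj T g = g) (A : Finset ℕ) :
    g - bs.proj A g = bs.proj (T \ A) g := by
  have hsplit : bs.proj (T ∩ A) g + bs.proj (T \ A) g = bs.proj T g :=
    Finset.sum_inter_add_sum_sdiff T A _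
  have hA : bs.proj A g = bs.proj (T ∩ A) g := by
    conv_lhs => rw [← hg]
    rw [proj_proj, Finset.inter_comm]
  rw [hA, sub_eq_iff_eq_add', hsplit, hg]

theorem exists_proj_eq_self_N_sub_lt (f : X) {η : ℝ} (hη : 0 < η) :
    ∃ (T : Finset ℕ) (g : X), bs.proj T g = g ∧ bs.N (f - g) < η := by
  obtain ⟨g, hg, hfg⟩ := bs.dense_span f η hη
  obtain ⟨c, rfl⟩ := Finsupp.mem_span_range_iff_exists_finsupp.1 hg
  have hsum : (c.sum fun n a => a • bs.e n) = ∑ n ∈ c.support, c n • bs.e n := rfl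
  rw [hsum] at hfg
  refine ⟨c.support, _, Finset.sum_congr rfl fun n hn => ?_, hfg⟩
  rw [bs.coord_sum_smul, if_pos hn]

theorem exists_norm_coord_lt (f : X) (A : Finset ℕ) {η : ℝ} (hη : 0 < η) :
    ∃ n ∉ A, ‖bs.coord n f‖ < η := by
  obtain ⟨c, hc, hcoord⟩ := bs.exists_coord_le_mul
  obtain ⟨T, g, hg, hfg⟩ := bs.exists_proj_eq_self_N_sub_lt f (div_pos hη hc)
  obtain ⟨n, hn⟩ := Infinite.exists_notMem_finset (A ∪ T)
  rw [Finset.mem_union, not_or] at hn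
  have hgn : bs.coord n g = 0 := by rw [← hg, coord_proj, if_neg hn.2]
  refine ⟨n, hn.1, ?_⟩
  calc ‖bs.coord n f‖ = ‖bs.coord n (f - g)‖ := by rw [map_sub, hgn, sub_zero]
    _ ≤ c * bs.N (f - g) := hcoord n _
    _ < η := by rwa [lt_div_iff₀' hc] at hfg

theorem exists_N_proj_rpow_le (hp : 0 < p) (A : Finset ℕ) :
    ∃ K ≥ 0, ∀ f : X, bs.N (bs.proj A f) ^ p ≤ K * bs.N f ^ p := by
  obtain ⟨c, hc, hcoord⟩ := bs.exists_coord_le_mul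
  obtain ⟨d, hd, he⟩ := bs.exists_N_e_le
  refine ⟨A.card * (c * d) ^ p, by positivity, fun f => ?_⟩
  calc bs.N (bs.proj A f) ^ p ≤ ∑ n ∈ A, bs.N (bs.coord n f • bs.e n) ^ p :=
        bs.N_sum_rpow_le hp.ne' A _
    _ = ∑ n ∈ A, ‖bs.coord n f‖ ^ p * bs.N (bs.e n) ^ p := by simp only [bs.N_smul_rpow]
    _ ≤ ∑ _n ∈ A, (c * bs.N f) ^ p * d ^ p := by
        refine Finset.sum_le_sum fun n _ => mul_le_mul ?_ ?_ ?_ ?_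
        · exact Real.rpow_le_rpow (norm_nonneg _) (hcoord n f) hp.le
        · exact Real.rpow_le_rpow (bs.N_nonneg _) (he n) hp.le
        · exact Real.rpow_nonneg (bs.N_nonneg _) p
        · exact Real.rpow_nonneg (mul_nonneg hc.le (bs.N_nonneg f)) p
    _ = A.card * (c * d) ^ p * bs.N f ^ p := by
        rw [Finset.sum_const, nsmul_eq_mul, Real.mul_rpow hc.le (bs.N_nonneg f),
          Real.mul_rpow hc.le hd]
        ring

theorem minCoef_le (f : X) {A : Finset ℕ} {n : ℕ} (hn : n ∈ A) :
    bs.minCoef f A ≤ ‖bs.coord n f‖ :=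
  csInf_le (A.finite_toSet.image _).bddBelow ⟨n, hn, rfl⟩

theorem minCoef_nonneg (f : X) (A : Finset ℕ) : 0 ≤ bs.minCoef f A :=
  Real.sInf_nonneg fun _ ⟨_, _, hx⟩ => hx ▸ norm_nonneg _

theorem minCoef_eq_add {f g : X} {A : Finset ℕ} (hA : A.Nonempty) {t : ℝ}
    (h : ∀ n ∈ A, ‖bs.coord n g‖ = ‖bs.coord n f‖ + t) :
    bs.minCoef g A = bs.minCoef f A + t := by
  unfold minCoef
  rw [Set.Finite.map_sInf_of_monotone (f := (· + t)) (fun _ _ hab => add_le_add_left hab t)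
    ((Finset.coe_nonempty.2 hA).image _) (A.finite_toSet.image _), Set.image_image]
  exact congrArg sInf (Set.image_congr h)

variable {bs}

theorem IsRGPCCWith.N_sub_proj_le_N_sub_indSign_sgn {C : ℝ} (h : bs.IsRGPCCWith C) (f : X)
    {A : Finset ℕ} (hA : A.Nonempty) :
    bs.N (f - bs.proj A f) ≤
      C * bs.N (f - ((bs.minCoef f A : ℝ) : 𝕜) • bs.indSign (fun n => sgn (bs.coord n f)) A) := by
  set ε : ℕ → 𝕜 := fun n => sgn (bs.coord n f)
  obtain ⟨c, hc, hcoord⟩ := bs.exists_coord_le_mul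
  set t := c * bs.N f
  have ht : 0 ≤ t := mul_nonneg hc.le (bs.N_nonneg f)
  set g := f + (t : 𝕜) • bs.indSign ε A with hg
  have hcoord_g (n : ℕ) : bs.coord n g = bs.coord n f + if n ∈ A then (t : 𝕜) * ε n else 0 := by
    rw [hg, map_add, map_smul, coord_indSign, smul_eq_mul, mul_ite, mul_zero]
  have hon : ∀ n ∈ A, ‖bs.coord n g‖ = ‖bs.coord n f‖ + t := fun n hn => by
    rw [hcoord_g, if_pos hn, norm_add_mul_sgn _ ht]
  have hgreedy : bs.IsGreedySet g A := fun n hn m hm => by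
    rw [hon n hn, hcoord_g, if_neg hm, add_zero]
    linarith [hcoord m f, norm_nonneg (bs.coord n f)]
  have hproj : bs.proj A g = bs.proj A f + (t : 𝕜) • bs.indSign ε A := by
    rw [hg, proj_add, proj_smul, proj_indSign]
  calc bs.N (f - bs.proj A f) = bs.N (g - bs.proj A g) := by
        rw [hproj, hg]; congr 1; abel
    _ ≤ C * bs.N (g - ((bs.minCoef g A : ℝ) : 𝕜) • bs.indSign ε A) :=
        h g A A ε hgreedy rfl fun j _ => norm_sgn _
    _ = _ := by
        rw [bs.minCoef_eq_add hA hon, RCLike.ofReal_add, add_smul, hg]; congr 2; abel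

theorem IsRGPCCWith.N_sub_proj_le (hp : 0 < p) {C : ℝ} (hC : 0 ≤ C) (h : bs.IsRGPCCWith C)
    (f : X) (A : Finset ℕ) : bs.N (f - bs.proj A f) ≤ C * bs.N f := by
  obtain ⟨d, -, he⟩ := bs.exists_N_e_le
  have he_rpow (n : ℕ) : bs.N (bs.e n) ^ p ≤ d ^ p :=
    Real.rpow_le_rpow (bs.N_nonneg _) (he n) hp.le
  set ε : ℕ → 𝕜 := fun n => sgn (bs.coord n f)
  set M := bs.N (bs.indSign ε A) ^ p
  refine le_of_forall_rpow_le_add_mul_rpow hp (bs.N_nonneg _) (mul_nonneg hC (bs.N_nonneg f))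
    (K := C ^ p * (d ^ p + M) + d ^ p) fun η hη => ?_
  obtain ⟨n, hnA, hn⟩ := bs.exists_norm_coord_lt f A hη
  set δ := bs.minCoef f (insert n A)
  have hδ0 : 0 ≤ δ := bs.minCoef_nonneg f _
  have hδ : δ ≤ η := (bs.minCoef_le f (Finset.mem_insert_self n A)).trans hn.le
  have hstep : bs.N (f - bs.proj A f) ^ p ≤
      bs.N (f - bs.proj (insert n A) f) ^ p + η ^ p * d ^ p := by
    have : f - bs.proj A f = (f - bs.proj (insert n A) f) + bs.coord n f • bs.e n := by
      simp only [proj, Finset.sum_insert hnA]; abel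
    rw [this]
    refine (bs.N_padd _ _).trans (add_le_add_right ?_ _)
    rw [N_smul_rpow]
    exact mul_le_mul (Real.rpow_le_rpow (norm_nonneg _) hn.le hp.le) (he_rpow n)
      (Real.rpow_nonneg (bs.N_nonneg _) _) (Real.rpow_nonneg hη.le _)
  have hrgpcc : bs.N (f - bs.proj (insert n A) f) ^ p ≤
      C ^ p * bs.N (f - (δ : 𝕜) • bs.indSign ε (insert n A)) ^ p := by
    exact rpow_le_mul_rpow_of_le_mul hp.le (bs.N_nonneg _) (bs.N_nonneg _) hC
      (h.N_sub_proj_le_N_sub_indSign_sgn f (Finset.insert_nonempty n A))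
  have hind : bs.N (bs.indSign ε (insert n A)) ^ p ≤ d ^ p + M := by
    rw [show bs.indSign ε (insert n A) = ε n • bs.e n + bs.indSign ε A from
      Finset.sum_insert hnA]
    refine (bs.N_padd _ _).trans (add_le_add_left ?_ _)
    rw [N_smul_rpow, norm_sgn, Real.one_rpow, one_mul]
    exact he_rpow n
  have hshift : bs.N (f - (δ : 𝕜) • bs.indSign ε (insert n A)) ^ p ≤
      bs.N f ^ p + η ^ p * (d ^ p + M) := by
    refine (bs.N_sub_rpow_le _ _).trans (add_le_add_right ?_ _)
    rw [N_smul_rpow, RCLike.norm_ofReal, abs_of_nonneg hδ0]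
    exact mul_le_mul (Real.rpow_le_rpow hδ0 hδ hp.le) hind
      (Real.rpow_nonneg (bs.N_nonneg _) _) (Real.rpow_nonneg hη.le _)
  rw [Real.mul_rpow hC (bs.N_nonneg f)]
  linarith [mul_le_mul_of_nonneg_left hshift (Real.rpow_nonneg hC p)]

variable (bs) in
theorem isUncondWith_of_N_sub_proj_le (hp : 0 < p) {C : ℝ} (hC : 0 ≤ C)
    (h : ∀ (A : Finset ℕ) (f : X), bs.N (f - bs.proj A f) ≤ C * bs.N f) :
    bs.IsUncondWith C := by
  intro A f
  obtain ⟨K, hK, hproj⟩ := bs.exists_N_proj_rpow_le hp A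
  refine le_of_forall_rpow_le_add_mul_rpow hp (bs.N_nonneg _) (mul_nonneg hC (bs.N_nonneg f))
    (K := C ^ p + K) fun η hη => ?_
  obtain ⟨T, g, hg, hfg⟩ := bs.exists_proj_eq_self_N_sub_lt f hη
  have hfg_rpow : bs.N (f - g) ^ p ≤ η ^ p := Real.rpow_le_rpow (bs.N_nonneg _) hfg.le hp.le
  have hPg : bs.N (bs.proj A g) ^ p ≤ C ^ p * bs.N g ^ p := by
    refine rpow_le_mul_rpow_of_le_mul hp.le (bs.N_nonneg _) (bs.N_nonneg _) hC ?_
    calc bs.N (bs.proj A g) = bs.N (g - bs.proj (T \ A) g) := by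
          rw [← bs.sub_proj_eq_proj_sdiff hg, sub_sub_cancel]
      _ ≤ C * bs.N g := h _ g
  have hg_near : bs.N g ^ p ≤ bs.N f ^ p + η ^ p := by
    linarith [bs.N_sub_comm g f ▸ bs.N_rpow_le_N_sub_rpow_add g f]
  have hsplit : bs.N (bs.proj A f) ^ p ≤
      bs.N (bs.proj A g) ^ p + bs.N (bs.proj A (f - g)) ^ p := by
    simpa [proj_sub] using bs.N_padd (bs.proj A g) (bs.proj A (f - g))
  rw [Real.mul_rpow hC (bs.N_nonneg f)]
  linarith [hproj (f - g), mul_le_mul_of_nonneg_left hg_near (Real.rpow_nonneg hC p),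
    mul_le_mul_of_nonneg_left hfg_rpow hK]

theorem IsUncondWith.N_le_N_add_of_disjoint (hp : 0 < p) {C : ℝ} (hC : 0 ≤ C)
    (h : bs.IsUncondWith C) {f g : X} (hfg : Disjoint (bs.supp f) (bs.supp g)) :
    bs.N f ≤ C * bs.N (f + g) := by
  refine le_of_forall_rpow_le_add_mul_rpow hp (bs.N_nonneg f) (mul_nonneg hC (bs.N_nonneg _))
    (K := 1 + 2 * C ^ p) fun η hη => ?_
  obtain ⟨T, u, hu, hfu⟩ := bs.exists_proj_eq_self_N_sub_lt f hη
  set A := T.filter fun n => bs.coord n g = 0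
  have hPA : bs.proj A (f + g) = bs.proj A f := bs.proj_congr fun n hn => by
    rw [map_add, (Finset.mem_filter.1 hn).2, add_zero]
  have hPTA : bs.proj (T \ A) u = bs.proj (T \ A) (u - f) := bs.proj_congr fun n hn => by
    obtain ⟨hnT, hnA⟩ := Finset.mem_sdiff.1 hn
    have hgn : n ∈ bs.supp g := fun hg0 => hnA (Finset.mem_filter.2 ⟨hnT, hg0⟩)
    have hfn : bs.coord n f = 0 := by simpa [supp] using Set.disjoint_right.1 hfg hgn
    rw [map_sub, hfn, sub_zero]
  have hdecomp : f - bs.proj A f = (f - u) - bs.proj A (f - u) + bs.proj (T \ A) (u - f) := by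
    rw [← hPTA, ← bs.sub_proj_eq_proj_sdiff hu, proj_sub]; abel
  have hfu_rpow : bs.N (f - u) ^ p ≤ η ^ p := Real.rpow_le_rpow (bs.N_nonneg _) hfu.le hp.le
  have hPsmall (B : Finset ℕ) (w : X) (hw : bs.N w ≤ η) :
      bs.N (bs.proj B w) ^ p ≤ C ^ p * η ^ p := by
    exact rpow_le_mul_rpow_of_le_mul hp.le (bs.N_nonneg _) hη.le hC
      ((h B w).trans (by gcongr))
  have hrest : bs.N (f - bs.proj A f) ^ p ≤ (1 + 2 * C ^ p) * η ^ p := by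
    rw [hdecomp]
    linarith [bs.N_padd (f - u - bs.proj A (f - u)) (bs.proj (T \ A) (u - f)),
      bs.N_sub_rpow_le (f - u) (bs.proj A (f - u)), hPsmall A (f - u) hfu.le,
      hPsmall (T \ A) (u - f) (bs.N_sub_comm u f ▸ hfu.le)]
  have hPf : bs.N (bs.proj A f) ^ p ≤ C ^ p * bs.N (f + g) ^ p := by
    rw [← hPA]
    exact rpow_le_mul_rpow_of_le_mul hp.le (bs.N_nonneg _) (bs.N_nonneg _) hC (h A _)
  rw [Real.mul_rpow hC (bs.N_nonneg _)]
  linarith [bs.N_rpow_le_N_sub_rpow_add f (bs.proj A f)]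

end PBasis

theorem RGPCC_implies_unconditional_general {𝕜 : Type*} [RCLike 𝕜] {X : Type*} [AddCommGroup X]
    [Module 𝕜 X] {p : ℝ} (hp : 0 < p) (bs : PBasis 𝕜 X p)
    (Cpg : ℝ) (hCpg : 0 < Cpg) (h : bs.IsRGPCCWith Cpg) :
    bs.IsUncondWith Cpg ∧
      ∀ f g : X, Disjoint (bs.supp f) (bs.supp g) → bs.N f ≤ Cpg * bs.N (f + g) := by
  have hunc : bs.IsUncondWith Cpg :=
    bs.isUncondWith_of_N_sub_proj_le hp hCpg.le fun A f => h.N_sub_proj_le hp hCpg.le f A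
  exact ⟨hunc, fun f g hfg => hunc.N_le_N_add_of_disjoint hp hCpg.le hfg⟩

/-- If a basis of a `p`-Banach space is `C_pg`-RGPCC, then it is unconditional
with unconditionality constant `K ≤ C_pg`; in particular `‖f‖ ≤ C_pg·‖f + g‖` whenever
`f` and `g` have disjoint supports. -/
theorem RGPCC_implies_unconditional {𝕜 : Type*} [RCLike 𝕜] {X : Type*} [AddCommGroup X]
    [Module 𝕜 X] {p : ℝ} (hp : 0 < p) (hp1 : p ≤ 1) (bs : PBasis 𝕜 X p)
    (Cpg : ℝ) (hCpg : 0 < Cpg) (h : bs.IsRGPCCWith Cpg) :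
    bs.IsUncondWith Cpg ∧
      ∀ f g : X, Disjoint (bs.supp f) (bs.supp g) → bs.N f ≤ Cpg * bs.N (f + g) :=
  RGPCC_implies_unconditional_general hp bs Cpg hCpg h
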